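/- In the bijection θ of Lemma 1 (gluing a pair (u₁, u₂) of unicellular maps of genera g₁, g₂ with j and n−j edges), the number of vertices of θ(u₁,u₂) equals J₁ + J₂ − 2 where J₁, J₂ are the vertex counts of u₁ and u₂ including plants, and the number of edges of θ(u₁,u₂) is n + 1; consequently θ(u₁,u₂) has genus g₁ + g₂. -/

import Mathlib

/-- Number of cycles of a permutation, counting fixed points as trivial cycles. -/
def cycleCount {β : Type*} [Fintype β] [DecidableEq β] (σ : Equiv.Perm β) : ℕ :=
  σ.cycleType.card + (Finset.univ.filter fun x => σ x = x).card

/-- `IsPUMap g n α σ`: `(α, σ)` is a planted unicellular map of genus `g` with `n` edges.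
The `2n+2` half-edges are `Fin (2*n+2)`, listed in boundary order: index `0` is the root
half-edge `1_R`, index `i` (for `1 ≤ i ≤ 2n`) is the half-edge labelled `i`, and index
`2n+1` is the plant half-edge `2n_R`.  `α` is a fixed-point-free involution containing
the rainbow cycle `(1_R, 2n_R)`, the boundary (face) permutation `γ = α ∘ σ` is the
single cycle `(1_R, 1, 2, …, 2n, 2n_R)`, i.e. the standard rotation `finRotate`, and the
genus is given by Euler's relation `2 - 2g = (J - 1) - n + 1`, where
`J = cycleCount σ` counts the vertices of the map including the plant. -/
def IsPUMap (g n : ℕ) (α σ : Equiv.Perm (Fin (2 * n + 2))) : Prop :=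
  (∀ x, α (α x) = x) ∧ (∀ x, α x ≠ x) ∧
  α ⟨0, by omega⟩ = ⟨2 * n + 1, by omega⟩ ∧
  α * σ = finRotate (2 * n + 2) ∧
  ((cycleCount σ : ℤ) - 1) - n + 1 = 2 - 2 * (g : ℤ)

/-- A planted unicellular map of genus `g` with `n` edges. -/
structure PUMap (g n : ℕ) where
  α : Equiv.Perm (Fin (2 * n + 2))
  σ : Equiv.Perm (Fin (2 * n + 2))
  prop : IsPUMap g n α σ

/-- The embedding of the half-edges of the second map `u₂` into the glued map. -/
def glue2 (k : ℕ) (i : ℕ) : ℕ := if i = 0 then 0 else i + (2 * k + 2)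

/-!
Let `c = 2j+2` be the half-edge of the glued map coming from the plant of `u₁`. The glued
involution `A` is `α₁` and `α₂` acting side by side on the two blocks of half-edges, and the
glued boundary rotation is the two boundary rotations side by side, spliced by the transposition
`(c 0)`. Pieces acting on different blocks commute, so the glued vertex permutation
`A⁻¹ γ` is `σ₁` and `σ₂` side by side, followed by `(c 0)`. The plant of `u₁` is a vertex of its
own, i.e. `c` is a fixed point, and multiplying by a transposition through a fixed point merges it
into another cycle. Hence the glued map has `J₁ + J₂ - 1` cycles, and Euler's relation gives
genus `g₁ + g₂`.
-/

open Equiv Equiv.Perm Finset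

section CycleCount

variable {β : Type*} [Fintype β] [DecidableEq β]

theorem cycleCount_add_card_support (σ : Perm β) :
    cycleCount σ + #σ.support = Multiset.card σ.cycleType + Fintype.card β := by
  have h : #(univ.filter fun x => σ x = x) + #σ.support = Fintype.card β := by
    rw [← card_univ]
    exact card_filter_add_card_filter_not _
  unfold cycleCount; omega

theorem cycleCount_one : cycleCount (1 : Perm β) = Fintype.card β := by
  simpa using cycleCount_add_card_support (1 : Perm β)

theorem Equiv.Perm.IsCycle.cycleCount_add_card_support {c : Perm β} (hc : c.IsCycle) :
    cycleCount c + #c.support = Fintype.card β + 1 := by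
  rw [_root_.cycleCount_add_card_support, hc.cycleType, Multiset.card_singleton, add_comm]

theorem cycleCount_mul_of_disjoint {σ τ : Perm β} (h : σ.Disjoint τ) :
    cycleCount (σ * τ) + Fintype.card β = cycleCount σ + cycleCount τ := by
  have hστ := cycleCount_add_card_support (σ * τ)
  have hσ := cycleCount_add_card_support σ
  have hτ := cycleCount_add_card_support τ
  rw [h.cycleType_mul, h.card_support_mul, Multiset.card_add] at hστ
  have := card_le_univ σ.support
  have := card_le_univ τ.support
  omega

theorem cycleCount_extendDomain {α : Type*} [Fintype α] [DecidableEq α] {p : β → Prop}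
    [DecidablePred p] (f : α ≃ Subtype p) (g : Perm α) :
    cycleCount (g.extendDomain f) + Fintype.card α = cycleCount g + Fintype.card β := by
  have hext := cycleCount_add_card_support (g.extendDomain f)
  have hg := cycleCount_add_card_support g
  rw [cycleType_extendDomain, card_support_extend_domain] at hext
  have := card_le_univ g.support
  omega

/-- Cutting `x` out of a cycle of length at least three leaves a shorter cycle and the fixed
point `x`; a cycle of length two falls apart into two fixed points. -/
theorem Equiv.Perm.IsCycle.cycleCount_swap_mul {c : Perm β} (hc : c.IsCycle) {x : β}
    (hx : c x ≠ x) : cycleCount (swap x (c x) * c) = cycleCount c + 1 := by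
  have hcount := hc.cycleCount_add_card_support
  by_cases hcx : c (c x) = x
  · have hswap : c = swap x (c x) := hc.eq_swap_of_apply_apply_eq_self hx hcx
    have hsupp : #c.support = 2 := by rw [hswap, card_support_swap hx.symm]
    have hcut : swap x (c x) * c = 1 := by
      nth_rw 2 [hswap]
      exact swap_mul_self _ _
    rw [hcut, cycleCount_one]
    omega
  · have hsupp : #(swap x (c x) * c).support + 1 = #c.support := by
      rw [support_swap_mul_eq c x hcx, sdiff_singleton_eq_erase,
        card_erase_add_one (mem_support.2 hx)]
    have := (hc.swap_mul hx hcx).cycleCount_add_card_support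
    omega

theorem cycleCount_swap_mul {σ : Perm β} {x : β} (hx : σ x ≠ x) :
    cycleCount (swap x (σ x) * σ) = cycleCount σ + 1 := by
  set c := σ.cycleOf x
  have hcycle : c.IsCycle := isCycle_cycleOf σ hx
  have hc : c ∈ σ.cycleFactorsFinset := cycleOf_mem_cycleFactorsFinset_iff.2 (mem_support.2 hx)
  have hdisj : c.Disjoint (σ * c⁻¹) := (disjoint_mul_inv_of_mem_cycleFactorsFinset hc).symm
  have hσ : c * (σ * c⁻¹) = σ := hdisj.commute.eq.trans (inv_mul_cancel_right σ c)
  have hcx : c x = σ x := cycleOf_apply_self σ x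
  have hdisj' : (swap x (c x) * c).Disjoint (σ * c⁻¹) :=
    hdisj.mono (fun y hy => (mem_support_swap_mul_imp_mem_support_ne hy).1) le_rfl
  have h₁ := cycleCount_mul_of_disjoint hdisj
  have h₂ := cycleCount_mul_of_disjoint hdisj'
  rw [hσ] at h₁
  rw [mul_assoc, hσ, hcx] at h₂
  have h₃ := hcycle.cycleCount_swap_mul (x := x) (by rwa [hcx])
  rw [hcx] at h₃
  omega

theorem cycleCount_mul_swap_of_apply_eq_self {σ : Perm β} {a b : β} (ha : σ a = a)
    (hab : a ≠ b) : cycleCount (σ * swap a b) + 1 = cycleCount σ := by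
  have hmoved : (σ * swap a b) a ≠ a := by
    rw [mul_apply, swap_apply_left]
    exact fun h => hab (σ.injective (h.trans ha.symm)).symm
  have hcut : swap a ((σ * swap a b) a) * (σ * swap a b) = σ := by
    rw [mul_apply, swap_apply_left, mul_swap_eq_swap_mul, ha, swap_mul_self_mul]
  rw [← cycleCount_swap_mul hmoved, hcut]

end CycleCount

theorem Equiv.Perm.extendDomain_apply_ne_self {α β : Type*} {p : β → Prop} [DecidablePred p]
    (f : α ≃ Subtype p) {g : Perm α} (hg : ∀ a, g a ≠ a) {b : β} (hb : p b) :
    g.extendDomain f b ≠ b := by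
  rw [extendDomain_apply_subtype g f hb]
  exact fun h => hg _ (f.eq_symm_apply.2 (Subtype.ext h))

theorem Equiv.Perm.disjoint_extendDomain {α α' β : Type*} {p q : β → Prop} [DecidablePred p]
    [DecidablePred q] (hpq : ∀ b, p b → ¬ q b) (f : α ≃ Subtype p) (f' : α' ≃ Subtype q)
    (g : Perm α) (g' : Perm α') : (g.extendDomain f).Disjoint (g'.extendDomain f') := by
  intro b
  by_cases hb : p b
  · exact Or.inr (extendDomain_apply_not_subtype g' f' (hpq b hb))
  · exact Or.inl (extendDomain_apply_not_subtype g f hb)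

theorem IsPUMap.apply_last {g n : ℕ} {α σ : Perm (Fin (2 * n + 2))} (h : IsPUMap g n α σ) :
    σ (Fin.last (2 * n + 1)) = Fin.last (2 * n + 1) := by
  obtain ⟨hinv, -, hroot, hface, -⟩ := h
  have hrot : α (σ (Fin.last _)) = ⟨0, by omega⟩ := by
    rw [← mul_apply, hface, finRotate_last]; rfl
  rw [← hinv (σ _), hrot, hroot]; rfl

section Gluing

variable {n j : ℕ} (hj : j ≤ n)

def glueFst :
    Fin (2 * j + 2) ≃ {y : Fin (2 * (n + 1) + 2) // 1 ≤ (y : ℕ) ∧ (y : ℕ) ≤ 2 * j + 2} where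
  toFun i := ⟨⟨i + 1, by omega⟩, by simp; omega⟩
  invFun y := ⟨y.1 - 1, by omega⟩
  left_inv i := by ext; simp
  right_inv y := by ext; simp; omega

def glueSnd :
    Fin (2 * (n - j) + 2) ≃ {y : Fin (2 * (n + 1) + 2) // (y : ℕ) = 0 ∨ 2 * j + 3 ≤ (y : ℕ)} where
  toFun i := ⟨⟨glue2 j i, by unfold glue2; split <;> omega⟩, by unfold glue2; split <;> simp; omega⟩
  invFun y := ⟨y.1 - (2 * j + 2), by omega⟩
  left_inv i := by ext; show glue2 j i - (2 * j + 2) = i; unfold glue2; split <;> omega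
  right_inv y := by
    ext; show glue2 j (y.1 - (2 * j + 2)) = y.1; have := y.2; unfold glue2; split <;> omega

@[simp]
theorem val_glueSnd_apply (i : Fin (2 * (n - j) + 2)) :
    ((glueSnd hj i : Fin (2 * (n + 1) + 2)) : ℕ) = glue2 j i :=
  rfl

theorem val_extendDomain_glueFst (g : Perm (Fin (2 * j + 2))) (x : Fin (2 * (n + 1) + 2)) :
    (g.extendDomain (glueFst hj) x : ℕ) =
      if h : 1 ≤ (x : ℕ) ∧ (x : ℕ) ≤ 2 * j + 2 then (g ⟨x - 1, by omega⟩ : ℕ) + 1 else x := by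
  split_ifs with h
  · rw [extendDomain_apply_subtype g (glueFst hj) h]; rfl
  · rw [extendDomain_apply_not_subtype g (glueFst hj) h]

theorem val_extendDomain_glueSnd (g : Perm (Fin (2 * (n - j) + 2))) (x : Fin (2 * (n + 1) + 2)) :
    (g.extendDomain (glueSnd hj) x : ℕ) =
      if (x : ℕ) = 0 ∨ 2 * j + 3 ≤ (x : ℕ) then glue2 j (g ⟨x - (2 * j + 2), by omega⟩) else x := by
  split_ifs with h
  · rw [extendDomain_apply_subtype g (glueSnd hj) h]; rfl
  · rw [extendDomain_apply_not_subtype g (glueSnd hj) h]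

theorem disjoint_extendDomain_glueFst_glueSnd (g : Perm (Fin (2 * j + 2)))
    (g' : Perm (Fin (2 * (n - j) + 2))) :
    (g.extendDomain (glueFst hj)).Disjoint (g'.extendDomain (glueSnd hj)) :=
  disjoint_extendDomain (fun _ _ => by omega) _ _ g g'

def gluePerm (α₁ : Perm (Fin (2 * j + 2))) (α₂ : Perm (Fin (2 * (n - j) + 2))) :
    Perm (Fin (2 * (n + 1) + 2)) :=
  α₁.extendDomain (glueFst hj) * α₂.extendDomain (glueSnd hj)

theorem gluePerm_mul (α₁ β₁ : Perm (Fin (2 * j + 2))) (α₂ β₂ : Perm (Fin (2 * (n - j) + 2))) :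
    gluePerm hj α₁ α₂ * gluePerm hj β₁ β₂ = gluePerm hj (α₁ * β₁) (α₂ * β₂) := by
  rw [gluePerm, gluePerm, gluePerm,
    (disjoint_extendDomain_glueFst_glueSnd hj β₁ α₂).commute.symm.mul_mul_mul_comm,
    extendDomain_mul, extendDomain_mul]

theorem gluePerm_one : gluePerm hj 1 1 = 1 := by
  rw [gluePerm, extendDomain_one, extendDomain_one, one_mul]

theorem gluePerm_inv (α₁ : Perm (Fin (2 * j + 2))) (α₂ : Perm (Fin (2 * (n - j) + 2))) :
    (gluePerm hj α₁ α₂)⁻¹ = gluePerm hj α₁⁻¹ α₂⁻¹ :=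
  (eq_inv_of_mul_eq_one_left (by rw [gluePerm_mul, inv_mul_cancel, inv_mul_cancel,
    gluePerm_one])).symm

theorem eq_gluePerm {α₁ : Perm (Fin (2 * j + 2))} {α₂ : Perm (Fin (2 * (n - j) + 2))}
    {A : Perm (Fin (2 * (n + 1) + 2))}
    (hA₁ : ∀ (i : Fin (2 * j + 2)) (x y : Fin (2 * (n + 1) + 2)),
      (x : ℕ) = (i : ℕ) + 1 → (y : ℕ) = (α₁ i : ℕ) + 1 → A x = y)
    (hA₂ : ∀ (i : Fin (2 * (n - j) + 2)) (x y : Fin (2 * (n + 1) + 2)),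
      (x : ℕ) = glue2 j i → (y : ℕ) = glue2 j (α₂ i) → A x = y) :
    A = gluePerm hj α₁ α₂ := by
  ext x : 1
  rw [gluePerm, mul_apply]
  by_cases hx : 1 ≤ (x : ℕ) ∧ (x : ℕ) ≤ 2 * j + 2
  · rw [extendDomain_apply_not_subtype α₂ (glueSnd hj) (by omega),
      extendDomain_apply_subtype α₁ (glueFst hj) hx]
    exact hA₁ _ _ _ (by show (x : ℕ) = x - 1 + 1; omega) rfl
  · have hx' : (x : ℕ) = 0 ∨ 2 * j + 3 ≤ (x : ℕ) := by omega
    have hy := (glueSnd hj (α₂ ((glueSnd hj).symm ⟨x, hx'⟩))).2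
    rw [extendDomain_apply_subtype α₂ (glueSnd hj) hx',
      extendDomain_apply_not_subtype α₁ (glueFst hj) (by omega)]
    exact hA₂ _ _ _ (by show (x : ℕ) = glue2 j (x - (2 * j + 2)); unfold glue2; split <;> omega) rfl

theorem finRotate_eq_gluePerm_mul_swap :
    finRotate (2 * (n + 1) + 2) =
      gluePerm hj (finRotate (2 * j + 2)) (finRotate (2 * (n - j) + 2)) *
        swap ⟨2 * j + 2, by omega⟩ ⟨0, by omega⟩ := by
  ext x
  have hx := x.isLt
  simp only [gluePerm, mul_apply, swap_apply_def, Fin.ext_iff, val_extendDomain_glueFst,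
    val_extendDomain_glueSnd, coe_finRotate, glue2, Fin.val_last]
  grind

theorem gluePerm_inv_mul_finRotate {α₁ σ₁ : Perm (Fin (2 * j + 2))}
    {α₂ σ₂ : Perm (Fin (2 * (n - j) + 2))}
    (h₁ : α₁ * σ₁ = finRotate (2 * j + 2)) (h₂ : α₂ * σ₂ = finRotate (2 * (n - j) + 2)) :
    (gluePerm hj α₁ α₂)⁻¹ * finRotate (2 * (n + 1) + 2) =
      gluePerm hj σ₁ σ₂ * swap ⟨2 * j + 2, by omega⟩ ⟨0, by omega⟩ := by
  rw [finRotate_eq_gluePerm_mul_swap hj, ← mul_assoc, gluePerm_inv, gluePerm_mul, ← h₁, ← h₂,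
    inv_mul_cancel_left, inv_mul_cancel_left]

theorem cycleCount_gluePerm_mul_swap {σ₁ : Perm (Fin (2 * j + 2))}
    {σ₂ : Perm (Fin (2 * (n - j) + 2))} (h₁ : σ₁ (Fin.last (2 * j + 1)) = Fin.last (2 * j + 1)) :
    cycleCount (gluePerm hj σ₁ σ₂ * swap ⟨2 * j + 2, by omega⟩ ⟨0, by omega⟩) + 1 =
      cycleCount σ₁ + cycleCount σ₂ := by
  have hfix : gluePerm hj σ₁ σ₂ ⟨2 * j + 2, by omega⟩ = ⟨2 * j + 2, by omega⟩ := by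
    rw [gluePerm, mul_apply, extendDomain_apply_not_subtype σ₂ (glueSnd hj) (by simp),
      show (⟨2 * j + 2, _⟩ : Fin _) = glueFst hj (Fin.last _) from rfl, extendDomain_apply_image,
      h₁]
  have hswap := cycleCount_mul_swap_of_apply_eq_self hfix (b := ⟨0, by omega⟩) (by simp)
  have hdisj := cycleCount_mul_of_disjoint (disjoint_extendDomain_glueFst_glueSnd hj σ₁ σ₂)
  have hext₁ := cycleCount_extendDomain (glueFst hj) σ₁
  have hext₂ := cycleCount_extendDomain (glueSnd hj) σ₂
  simp only [Fintype.card_fin] at hdisj hext₁ hext₂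
  unfold gluePerm at hswap ⊢
  omega

theorem gluePerm_involutive {α₁ : Perm (Fin (2 * j + 2))} {α₂ : Perm (Fin (2 * (n - j) + 2))}
    (h₁ : Function.Involutive α₁) (h₂ : Function.Involutive α₂) :
    Function.Involutive (gluePerm hj α₁ α₂) := by
  have hsq : gluePerm hj α₁ α₂ * gluePerm hj α₁ α₂ = 1 := by
    rw [gluePerm_mul, show α₁ * α₁ = 1 from Equiv.ext h₁, show α₂ * α₂ = 1 from Equiv.ext h₂,
      gluePerm_one]
  exact fun x => DFunLike.congr_fun hsq x

theorem gluePerm_apply_ne_self {α₁ : Perm (Fin (2 * j + 2))} {α₂ : Perm (Fin (2 * (n - j) + 2))}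
    (h₁ : ∀ x, α₁ x ≠ x) (h₂ : ∀ x, α₂ x ≠ x) (x : Fin (2 * (n + 1) + 2)) :
    gluePerm hj α₁ α₂ x ≠ x := by
  rw [gluePerm, Ne, (disjoint_extendDomain_glueFst_glueSnd hj α₁ α₂).mul_apply_eq_iff,
    not_and_or]
  by_cases hx : 1 ≤ (x : ℕ) ∧ (x : ℕ) ≤ 2 * j + 2
  · exact Or.inl (extendDomain_apply_ne_self (glueFst hj) h₁ hx)
  · exact Or.inr (extendDomain_apply_ne_self (glueSnd hj) h₂ (by omega))

theorem gluePerm_apply_zero (α₁ : Perm (Fin (2 * j + 2))) {α₂ : Perm (Fin (2 * (n - j) + 2))}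
    (h₂ : α₂ ⟨0, by omega⟩ = ⟨2 * (n - j) + 1, by omega⟩) :
    gluePerm hj α₁ α₂ ⟨0, by omega⟩ = ⟨2 * (n + 1) + 1, by omega⟩ := by
  rw [gluePerm, mul_apply,
    show (⟨0, _⟩ : Fin (2 * (n + 1) + 2)) = glueSnd hj ⟨0, by omega⟩ from rfl,
    extendDomain_apply_image, h₂, extendDomain_apply_not_subtype α₁ (glueFst hj)]
  · exact Fin.ext (by simp [glue2]; omega)
  · simp [glue2]

end Gluing

/-- In the bijection `θ` of Lemma 1, gluing a pair `(u₁, u₂)` of planted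
unicellular maps of genera `g₁, g₂` with `j` and `n-j` edges (hypotheses `hA₁`, `hA₂`
express the gluing on half-edges, as in Statement 5; the glued vertex permutation is
`S = A⁻¹ * finRotate`), the number of vertices of `θ(u₁,u₂)` (not counting its plant)
equals `J₁ + J₂ - 2`, where `J₁ = cycleCount u₁.σ` and `J₂ = cycleCount u₂.σ` are the
vertex counts of `u₁` and `u₂` including their plants; the number of edges of
`θ(u₁,u₂)` is `n+1` (it is a map on `2(n+1)+2` half-edges); consequently `θ(u₁,u₂)` is
a planted unicellular map of genus `g₁ + g₂`. -/
theorem stmt17 (n j g₁ g₂ : ℕ) (hj : j ≤ n)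
    (u₁ : PUMap g₁ j) (u₂ : PUMap g₂ (n - j))
    (A : Equiv.Perm (Fin (2 * (n + 1) + 2)))
    (hA₁ : ∀ (i : Fin (2 * j + 2)) (x y : Fin (2 * (n + 1) + 2)),
      (x : ℕ) = (i : ℕ) + 1 → (y : ℕ) = (u₁.α i : ℕ) + 1 → A x = y)
    (hA₂ : ∀ (i : Fin (2 * (n - j) + 2)) (x y : Fin (2 * (n + 1) + 2)),
      (x : ℕ) = glue2 j i → (y : ℕ) = glue2 j (u₂.α i) → A x = y) :
    cycleCount (A⁻¹ * finRotate (2 * (n + 1) + 2)) - 1 =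
        cycleCount u₁.σ + cycleCount u₂.σ - 2 ∧
      IsPUMap (g₁ + g₂) (n + 1) A (A⁻¹ * finRotate (2 * (n + 1) + 2)) := by
  obtain ⟨hinv₁, hfree₁, -, hface₁, heuler₁⟩ := u₁.prop
  obtain ⟨hinv₂, hfree₂, hroot₂, hface₂, heuler₂⟩ := u₂.prop
  obtain rfl : A = gluePerm hj u₁.α u₂.α := eq_gluePerm hj hA₁ hA₂
  have hcount : cycleCount ((gluePerm hj u₁.α u₂.α)⁻¹ * finRotate (2 * (n + 1) + 2)) + 1 =
      cycleCount u₁.σ + cycleCount u₂.σ := by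
    rw [gluePerm_inv_mul_finRotate hj hface₁ hface₂]
    exact cycleCount_gluePerm_mul_swap hj u₁.prop.apply_last
  refine ⟨by omega, gluePerm_involutive hj hinv₁ hinv₂, gluePerm_apply_ne_self hj hfree₁ hfree₂,
    gluePerm_apply_zero hj _ hroot₂, mul_inv_cancel_left _ _, ?_⟩
  push_cast [Nat.cast_sub hj] at heuler₂ ⊢
  omega
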